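/- Let T1, T2, T3, T4 be bounded linear operators on H each admitting an A-adjoint S_i = T_i^{#_A} (i.e. A∘S_i = T_i*∘A and range(S_i) ⊆ closure(range A)). Then w_B([[T1,T2],[T3,T4]]) ≤ min(α, β), where α = ((‖T1+T2‖_A² + ‖T1-T2‖_A²)/2)^{1/2} + ((‖T4+T3‖_A² + ‖T4-T3‖_A²)/2)^{1/2} and β = ((‖T1+T3‖_A² + ‖T1-T3‖_A²)/2)^{1/2} + ((‖T2+T4‖_A² + ‖T2-T4‖_A²)/2)^{1/2}. -/

import Mathlib

open scoped InnerProductSpace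
open ContinuousLinearMap

variable {H : Type*} [NormedAddCommGroup H] [InnerProductSpace ℂ H] [CompleteSpace H]

/-- The `A`-seminorm `‖x‖_A = √⟨Ax,x⟩`. -/
noncomputable def aNorm (A : H →L[ℂ] H) (x : H) : ℝ :=
  Real.sqrt (⟪A x, x⟫_ℂ).re

/-- The `A`-numerical radius `w_A(T) = sup {|⟨ATx,x⟩| : x ∈ H, ‖x‖_A = 1}`. -/
noncomputable def wA (A T : H →L[ℂ] H) : ℝ :=
  sSup {r : ℝ | ∃ x : H, aNorm A x = 1 ∧ r = ‖⟪A (T x), x⟫_ℂ‖}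

/-- The `A`-operator seminorm `‖T‖_A = sup {‖Tx‖_A : x ∈ closure (range A), ‖x‖_A = 1}`. -/
noncomputable def aOpNorm (A T : H →L[ℂ] H) : ℝ :=
  sSup {r : ℝ | ∃ x : H, x ∈ closure (Set.range (⇑A)) ∧ aNorm A x = 1 ∧ r = aNorm A (T x)}

/-- The `B`-numerical radius of the operator matrix `[[T1,T2],[T3,T4]]` acting on `H ⊕ H` by
`(x, y) ↦ (T1 x + T2 y, T3 x + T4 y)`, where `B = [[A,0],[0,A]]`:
`w_B(T) = sup {|⟨BTz,z⟩| : z ∈ H ⊕ H, ‖z‖_B = 1}`. -/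
noncomputable def wB (A T1 T2 T3 T4 : H →L[ℂ] H) : ℝ :=
  sSup {r : ℝ | ∃ x y : H, Real.sqrt ((⟪A x, x⟫_ℂ).re + (⟪A y, y⟫_ℂ).re) = 1 ∧
    r = ‖⟪A (T1 x + T2 y), x⟫_ℂ + ⟪A (T3 x + T4 y), y⟫_ℂ‖}

/-!
Write `A = R²` with `R = √A`, so that `⟨Ax, y⟩ = ⟨Rx, Ry⟩` and `‖x‖_A = ‖Rx‖`. An operator
`T` with an `A`-adjoint `S` is `A`-bounded: `V = S T` is `A`-symmetric, so `n ↦ ‖R Vⁿ u‖` is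
log-convex and grows at most like `‖V‖ⁿ`, which forces `‖Vu‖_A ≤ ‖V‖ ‖u‖_A`; hence
`‖Tu‖_A² = ⟨Vu, u⟩_A ≤ ‖V‖ ‖u‖_A²`.
Moreover `‖Tx‖_A ≤ ‖T‖_A ‖x‖_A` for every `x`, not only for `x` in the closure of the range of
`A`, because `A T x` only depends on `A x`.

For `z = (x, y)` with `‖x‖_A² + ‖y‖_A² = 1`, split `⟨BTz, z⟩` into two pieces such as
`⟨T₁x, x⟩_A + ⟨T₂y, x⟩_A = (⟨(T₁ + T₂)(x + y), x⟩_A + ⟨(T₁ - T₂)(x - y), x⟩_A) / 2`.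
Since `‖x + y‖_A² + ‖x - y‖_A² = 2`, Cauchy–Schwarz in `ℝ²` bounds this piece by
`((‖T₁ + T₂‖_A² + ‖T₁ - T₂‖_A²) / 2)^{1/2} ‖x‖_A`. Grouping the four entries by rows gives
`α`, by columns `β`.
-/

theorem le_of_pow_le_mul_pow {r c M : ℝ} (hc : 0 ≤ c) (h : ∀ n : ℕ, r ^ n ≤ M * c ^ n) :
    r ≤ c := by
  by_contra! hcr
  rcases hc.eq_or_lt with rfl | hc
  · have h1 := h 1
    simp only [pow_one, mul_zero] at h1
    exact h1.not_gt hcr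
  obtain ⟨n, hn⟩ := pow_unbounded_of_one_lt M ((one_lt_div hc).mpr hcr)
  rw [div_pow, lt_div_iff₀ (by positivity)] at hn
  exact (h n).not_gt hn

theorem le_mul_of_sq_le_mul_of_le_mul_pow {f : ℕ → ℝ} (hf : ∀ n, 0 ≤ f n)
    (hconv : ∀ n, f (n + 1) ^ 2 ≤ f n * f (n + 2)) {M c : ℝ} (hc : 0 ≤ c)
    (hgrow : ∀ n, f n ≤ M * c ^ n) : f 1 ≤ c * f 0 := by
  rcases (hf 0).eq_or_lt with h0 | h0
  · have h1 : f 1 ^ 2 ≤ 0 := by simpa [← h0] using hconv 0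
    rw [← h0, mul_zero]
    nlinarith [hf 1]
  set r := f 1 / f 0
  have hr : 0 ≤ r := div_nonneg (hf 1) h0.le
  -- log-convexity makes the ratios `f (n + 1) / f n` nondecreasing
  have hstep : ∀ n, r * f n ≤ f (n + 1) := by
    intro n
    induction n with
    | zero => exact (div_mul_cancel₀ _ h0.ne').le
    | succ n ih =>
      rcases (hf (n + 1)).eq_or_lt with h1 | h1
      · rw [← h1, mul_zero]; exact hf _
      · nlinarith [hconv n, mul_le_mul_of_nonneg_right ih (hf (n + 2)), hf n]
  have hpow : ∀ n, r ^ n * f 0 ≤ f n := by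
    intro n
    induction n with
    | zero => simp
    | succ n ih => nlinarith [hstep n, pow_succ' r n]
  have hrc : r ≤ c := le_of_pow_le_mul_pow (M := M / f 0) hc fun n => by
    rw [div_mul_eq_mul_div, le_div_iff₀ h0]
    exact (hpow n).trans (hgrow n)
  calc f 1 = r * f 0 := (div_mul_cancel₀ _ h0.ne').symm
    _ ≤ c * f 0 := mul_le_mul_of_nonneg_right hrc h0.le

theorem add_div_two_le_sqrt_mul {a b p q s u v : ℝ} (hpq : p ^ 2 + q ^ 2 = 2) (hs : 0 ≤ s)
    (hu : u ≤ a * p * s) (hv : v ≤ b * q * s) : (u + v) / 2 ≤ √((a ^ 2 + b ^ 2) / 2) * s := by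
  have hcs : (a * p + b * q) / 2 ≤ √((a ^ 2 + b ^ 2) / 2) :=
    (le_abs_self _).trans <| Real.abs_le_sqrt <| by nlinarith [sq_nonneg (a * q - b * p)]
  nlinarith [mul_le_mul_of_nonneg_right hcs hs]

theorem mul_add_mul_le_add_of_sq_add_sq_eq_one {a b s t : ℝ} (ha : 0 ≤ a) (hb : 0 ≤ b)
    (hs : 0 ≤ s) (ht : 0 ≤ t) (hst : s ^ 2 + t ^ 2 = 1) : a * s + b * t ≤ a + b := by
  have hs1 : s ≤ 1 := by nlinarith
  have ht1 : t ≤ 1 := by nlinarith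
  nlinarith

theorem aOpNorm_sub_comm {E : Type*} [NormedAddCommGroup E] [InnerProductSpace ℂ E]
    (A T T' : E →L[ℂ] E) : aOpNorm A (T - T') = aOpNorm A (T' - T) := by
  simp only [aOpNorm, aNorm, sub_apply, ← neg_sub (T' _), map_neg, inner_neg_left,
    inner_neg_right, neg_neg]

theorem norm_apply_add_sq_add_norm_apply_sub_sq {E : Type*} [NormedAddCommGroup E]
    [InnerProductSpace ℂ E] (R : E →L[ℂ] E) {x y : E} (hxy : ‖R x‖ ^ 2 + ‖R y‖ ^ 2 = 1) :
    ‖R (x + y)‖ ^ 2 + ‖R (x - y)‖ ^ 2 = 2 := by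
  rw [map_add, map_sub]
  linear_combination parallelogram_law_with_norm ℂ (R x) (R y) + 2 * hxy

/-- `S` is an `A`-adjoint of `T`, i.e. `⟨Tx, y⟩_A = ⟨x, Sy⟩_A`; the distinguished one, `T^{#_A}`,
moreover has its range in the closure of the range of `A`. -/
def IsAAdjoint (A T S : H →L[ℂ] H) : Prop :=
  A ∘L S = adjoint T ∘L A

namespace IsAAdjoint

variable {A T S T' S' : H →L[ℂ] H}

theorem apply_apply (h : IsAAdjoint A T S) (x : H) : A (S x) = adjoint T (A x) :=
  congrArg (fun f : H →L[ℂ] H => f x) h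

theorem add (h : IsAAdjoint A T S) (h' : IsAAdjoint A T' S') :
    IsAAdjoint A (T + T') (S + S') := by
  rw [IsAAdjoint, map_add, comp_add, add_comp, h, h']

theorem sub (h : IsAAdjoint A T S) (h' : IsAAdjoint A T' S') :
    IsAAdjoint A (T - T') (S - S') := by
  rw [IsAAdjoint, map_sub, comp_sub, sub_comp, h, h']

theorem inner_apply_left (hA : IsSelfAdjoint A) (h : IsAAdjoint A T S) (x y : H) :
    ⟪A (T x), y⟫_ℂ = ⟪A x, S y⟫_ℂ := by
  rw [hA.isSymmetric.apply_clm, ← adjoint_inner_right, ← h.apply_apply,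
    hA.isSymmetric.apply_clm]

theorem inner_comp_apply_left (hA : IsSelfAdjoint A) (h : IsAAdjoint A T S) (x y : H) :
    ⟪A ((S ∘L T) x), y⟫_ℂ = ⟪A x, (S ∘L T) y⟫_ℂ := by
  rw [comp_apply, h.apply_apply, adjoint_inner_left, h.inner_apply_left hA, comp_apply]

end IsAAdjoint

theorem exists_mem_closure_range_apply_eq {A : H →L[ℂ] H} (hA : IsSelfAdjoint A) (x : H) :
    ∃ u ∈ A.range.topologicalClosure, A u = A x := by
  refine ⟨x - (A.range)ᗮ.starProjection x, ?_, ?_⟩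
  · have h := (A.range)ᗮ.sub_starProjection_mem_orthogonal x
    rwa [Submodule.orthogonal_orthogonal_eq_closure] at h
  · have h : (A.range)ᗮ.starProjection x ∈ (adjoint A).ker :=
      (orthogonal_range A).le (Submodule.starProjection_apply_mem _ x)
    rw [hA.adjoint_eq, LinearMap.mem_ker, coe_coe] at h
    rw [map_sub, h, sub_zero]

section SquareRoot

variable {R : H →L[ℂ] H}

theorem inner_mul_self_apply (hR : IsSelfAdjoint R) (x y : H) :
    ⟪(R * R) x, y⟫_ℂ = ⟪R x, R y⟫_ℂ :=
  hR.isSymmetric (R x) y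

theorem re_inner_mul_self_apply_self (hR : IsSelfAdjoint R) (x : H) :
    (⟪(R * R) x, x⟫_ℂ).re = ‖R x‖ ^ 2 := by
  rw [inner_mul_self_apply hR, ← inner_self_eq_norm_sq (𝕜 := ℂ)]
  rfl

theorem aNorm_mul_self (hR : IsSelfAdjoint R) (x : H) : aNorm (R * R) x = ‖R x‖ := by
  rw [aNorm, re_inner_mul_self_apply_self hR, Real.sqrt_sq (norm_nonneg _)]

theorem norm_inner_mul_self_apply_le (hR : IsSelfAdjoint R) (x y : H) :
    ‖⟪(R * R) x, y⟫_ℂ‖ ≤ ‖R x‖ * ‖R y‖ := by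
  rw [inner_mul_self_apply hR]
  exact norm_inner_le_norm _ _

theorem norm_apply_le_of_inner_symm (hR : IsSelfAdjoint R) {V : H →L[ℂ] H}
    (hV : ∀ x y, ⟪(R * R) (V x), y⟫_ℂ = ⟪(R * R) x, V y⟫_ℂ) (u : H) :
    ‖R (V u)‖ ≤ ‖V‖ * ‖R u‖ := by
  have hsucc : ∀ n, (V ^ (n + 1)) u = V ((V ^ n) u) := by simp [pow_succ']
  have hconv :
      ∀ n, ‖R ((V ^ (n + 1)) u)‖ ^ 2 ≤ ‖R ((V ^ n) u)‖ * ‖R ((V ^ (n + 2)) u)‖ := by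
    intro n
    rw [← re_inner_mul_self_apply_self hR, hsucc, hV, ← hsucc, ← hsucc]
    exact (Complex.re_le_norm _).trans (norm_inner_mul_self_apply_le hR _ _)
  have hpow : ∀ n, ‖(V ^ n) u‖ ≤ ‖V‖ ^ n * ‖u‖ := by
    intro n
    induction n with
    | zero => simp
    | succ n ih =>
      rw [hsucc, pow_succ', mul_assoc]
      exact (V.le_opNorm _).trans (by gcongr)
  have hgrow : ∀ n, ‖R ((V ^ n) u)‖ ≤ ‖R‖ * ‖u‖ * ‖V‖ ^ n := fun n =>
    calc ‖R ((V ^ n) u)‖ ≤ ‖R‖ * (‖V‖ ^ n * ‖u‖) :=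
          (R.le_opNorm _).trans (by gcongr; exact hpow n)
      _ = ‖R‖ * ‖u‖ * ‖V‖ ^ n := by ring
  simpa using le_mul_of_sq_le_mul_of_le_mul_pow (fun n => norm_nonneg _) hconv (norm_nonneg V)
    hgrow

theorem IsAAdjoint.norm_apply_sq_le (hR : IsSelfAdjoint R) {T S : H →L[ℂ] H}
    (h : IsAAdjoint (R * R) T S) (x : H) : ‖R (T x)‖ ^ 2 ≤ ‖R x‖ * ‖R (S (T x))‖ := by
  rw [← re_inner_mul_self_apply_self hR, h.inner_apply_left (sq R ▸ hR.pow 2) x]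
  exact (Complex.re_le_norm _).trans (norm_inner_mul_self_apply_le hR _ _)

theorem IsAAdjoint.norm_apply_sq_le_norm_comp_mul (hR : IsSelfAdjoint R) {T S : H →L[ℂ] H}
    (h : IsAAdjoint (R * R) T S) (x : H) : ‖R (T x)‖ ^ 2 ≤ ‖S ∘L T‖ * ‖R x‖ ^ 2 :=
  calc ‖R (T x)‖ ^ 2 ≤ ‖R x‖ * ‖R ((S ∘L T) x)‖ := h.norm_apply_sq_le hR x
    _ ≤ ‖R x‖ * (‖S ∘L T‖ * ‖R x‖) := by
      gcongr
      exact norm_apply_le_of_inner_symm hR (h.inner_comp_apply_left (sq R ▸ hR.pow 2)) x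
    _ = ‖S ∘L T‖ * ‖R x‖ ^ 2 := by ring

theorem apply_eq_of_mul_self_apply_eq (hR : IsSelfAdjoint R) {x y : H}
    (h : (R * R) x = (R * R) y) : R x = R y := by
  have h0 : ‖R (x - y)‖ ^ 2 = 0 := by
    rw [← re_inner_mul_self_apply_self hR, map_sub, h, sub_self, inner_zero_left, Complex.zero_re]
  rw [← sub_eq_zero, ← map_sub]
  simpa using h0

theorem IsAAdjoint.norm_apply_le_aOpNorm (hR : IsSelfAdjoint R) {T S : H →L[ℂ] H}
    (h : IsAAdjoint (R * R) T S) {v : H} (hv : v ∈ (R * R).range.topologicalClosure)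
    (hv1 : ‖R v‖ = 1) : ‖R (T v)‖ ≤ aOpNorm (R * R) T := by
  rw [← aNorm_mul_self hR]
  have hv' : v ∈ closure (Set.range (R * R)) := by
    rw [← SetLike.mem_coe, Submodule.topologicalClosure_coe] at hv
    exact hv
  refine le_csSup ⟨√‖S ∘L T‖, ?_⟩ ⟨v, hv', by rwa [aNorm_mul_self hR], rfl⟩
  rintro _ ⟨x, -, hx, rfl⟩
  rw [aNorm_mul_self hR] at hx ⊢
  refine Real.le_sqrt_of_sq_le ?_
  simpa [hx] using h.norm_apply_sq_le_norm_comp_mul hR x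

theorem IsAAdjoint.norm_apply_le_aOpNorm_mul (hR : IsSelfAdjoint R) {T S : H →L[ℂ] H}
    (h : IsAAdjoint (R * R) T S) (x : H) : ‖R (T x)‖ ≤ aOpNorm (R * R) T * ‖R x‖ := by
  obtain ⟨u, hu, hux⟩ := exists_mem_closure_range_apply_eq (sq R ▸ hR.pow 2) x
  have hRu : R u = R x := apply_eq_of_mul_self_apply_eq hR hux
  have hRTu : R (T u) = R (T x) := by
    have hsq := h.norm_apply_sq_le hR (u - x)
    rw [map_sub R u x, hRu, sub_self, norm_zero, zero_mul] at hsq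
    simpa [sub_eq_zero] using hsq
  rw [← hRTu, ← hRu]
  rcases (norm_nonneg (R u)).eq_or_lt with h0 | h0
  · have hsq := h.norm_apply_sq_le hR u
    rw [← h0, zero_mul] at hsq
    rw [← h0, mul_zero]
    nlinarith [norm_nonneg (R (T u))]
  set t := ‖R u‖
  have hscale : ∀ w, ‖R ((t : ℂ)⁻¹ • w)‖ = t⁻¹ * ‖R w‖ := fun w => by
    rw [map_smul, norm_smul, norm_inv, Complex.norm_real, Real.norm_of_nonneg h0.le]
  have h1 := h.norm_apply_le_aOpNorm hR (Submodule.smul_mem _ _ hu)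
    (by rw [hscale, inv_mul_cancel₀ h0.ne'])
  rw [map_smul, hscale, inv_mul_le_iff₀ h0, mul_comm] at h1
  exact h1

theorem IsAAdjoint.norm_inner_apply_le_aOpNorm_mul (hR : IsSelfAdjoint R) {T S : H →L[ℂ] H}
    (h : IsAAdjoint (R * R) T S) (z x : H) :
    ‖⟪(R * R) (T z), x⟫_ℂ‖ ≤ aOpNorm (R * R) T * ‖R z‖ * ‖R x‖ :=
  (norm_inner_mul_self_apply_le hR _ _).trans (by gcongr; exact h.norm_apply_le_aOpNorm_mul hR z)

variable {U W SU SW : H →L[ℂ] H} {x y : H}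

theorem norm_inner_add_inner_le_of_row (hR : IsSelfAdjoint R) (hU : IsAAdjoint (R * R) U SU)
    (hW : IsAAdjoint (R * R) W SW) (hxy : ‖R x‖ ^ 2 + ‖R y‖ ^ 2 = 1) :
    ‖⟪(R * R) (U x), x⟫_ℂ + ⟪(R * R) (W y), x⟫_ℂ‖ ≤
      √((aOpNorm (R * R) (U + W) ^ 2 + aOpNorm (R * R) (U - W) ^ 2) / 2) * ‖R x‖ := by
  have hpar := norm_apply_add_sq_add_norm_apply_sub_sq R hxy
  have hsplit : ⟪(R * R) (U x), x⟫_ℂ + ⟪(R * R) (W y), x⟫_ℂ =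
      (⟪(R * R) ((U + W) (x + y)), x⟫_ℂ + ⟪(R * R) ((U - W) (x - y)), x⟫_ℂ) / 2 := by
    simp only [add_apply, sub_apply, map_add, map_sub, inner_add_left, inner_sub_left]
    ring
  rw [hsplit, norm_div, Complex.norm_two]
  exact (div_le_div_of_nonneg_right (norm_add_le _ _) zero_le_two).trans <|
    add_div_two_le_sqrt_mul hpar (norm_nonneg _)
      ((hU.add hW).norm_inner_apply_le_aOpNorm_mul hR _ _)
      ((hU.sub hW).norm_inner_apply_le_aOpNorm_mul hR _ _)

theorem norm_inner_add_inner_le_of_column (hR : IsSelfAdjoint R) (hU : IsAAdjoint (R * R) U SU)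
    (hW : IsAAdjoint (R * R) W SW) (hxy : ‖R x‖ ^ 2 + ‖R y‖ ^ 2 = 1) :
    ‖⟪(R * R) (U x), x⟫_ℂ + ⟪(R * R) (W x), y⟫_ℂ‖ ≤
      √((aOpNorm (R * R) (U + W) ^ 2 + aOpNorm (R * R) (U - W) ^ 2) / 2) * ‖R x‖ := by
  have hpar := norm_apply_add_sq_add_norm_apply_sub_sq R hxy
  have hsplit : ⟪(R * R) (U x), x⟫_ℂ + ⟪(R * R) (W x), y⟫_ℂ =
      (⟪(R * R) ((U + W) x), x + y⟫_ℂ + ⟪(R * R) ((U - W) x), x - y⟫_ℂ) / 2 := by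
    simp only [add_apply, sub_apply, map_add, map_sub, inner_add_left, inner_sub_left,
      inner_add_right, inner_sub_right]
    ring
  rw [hsplit, norm_div, Complex.norm_two]
  exact (div_le_div_of_nonneg_right (norm_add_le _ _) zero_le_two).trans <|
    add_div_two_le_sqrt_mul hpar (norm_nonneg _)
      (((hU.add hW).norm_inner_apply_le_aOpNorm_mul hR _ _).trans_eq (mul_right_comm _ _ _))
      (((hU.sub hW).norm_inner_apply_le_aOpNorm_mul hR _ _).trans_eq (mul_right_comm _ _ _))

variable {T1 T2 T3 T4 S1 S2 S3 S4 : H →L[ℂ] H}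

theorem norm_inner_le_sqrt_add_sqrt_of_rows (hR : IsSelfAdjoint R)
    (h1 : IsAAdjoint (R * R) T1 S1) (h2 : IsAAdjoint (R * R) T2 S2)
    (h3 : IsAAdjoint (R * R) T3 S3) (h4 : IsAAdjoint (R * R) T4 S4)
    (hxy : ‖R x‖ ^ 2 + ‖R y‖ ^ 2 = 1) :
    ‖⟪(R * R) (T1 x + T2 y), x⟫_ℂ + ⟪(R * R) (T3 x + T4 y), y⟫_ℂ‖ ≤
      √((aOpNorm (R * R) (T1 + T2) ^ 2 + aOpNorm (R * R) (T1 - T2) ^ 2) / 2) +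
      √((aOpNorm (R * R) (T4 + T3) ^ 2 + aOpNorm (R * R) (T4 - T3) ^ 2) / 2) := by
  calc _ = ‖(⟪(R * R) (T1 x), x⟫_ℂ + ⟪(R * R) (T2 y), x⟫_ℂ) +
          (⟪(R * R) (T4 y), y⟫_ℂ + ⟪(R * R) (T3 x), y⟫_ℂ)‖ := by
        simp only [map_add, inner_add_left]
        ring_nf
    _ ≤ _ := norm_add_le _ _
    _ ≤ _ := add_le_add (norm_inner_add_inner_le_of_row hR h1 h2 hxy)
        (norm_inner_add_inner_le_of_row hR h4 h3 (by linarith))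
    _ ≤ _ := mul_add_mul_le_add_of_sq_add_sq_eq_one (Real.sqrt_nonneg _) (Real.sqrt_nonneg _)
        (norm_nonneg _) (norm_nonneg _) hxy

theorem norm_inner_le_sqrt_add_sqrt_of_columns (hR : IsSelfAdjoint R)
    (h1 : IsAAdjoint (R * R) T1 S1) (h2 : IsAAdjoint (R * R) T2 S2)
    (h3 : IsAAdjoint (R * R) T3 S3) (h4 : IsAAdjoint (R * R) T4 S4)
    (hxy : ‖R x‖ ^ 2 + ‖R y‖ ^ 2 = 1) :
    ‖⟪(R * R) (T1 x + T2 y), x⟫_ℂ + ⟪(R * R) (T3 x + T4 y), y⟫_ℂ‖ ≤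
      √((aOpNorm (R * R) (T1 + T3) ^ 2 + aOpNorm (R * R) (T1 - T3) ^ 2) / 2) +
      √((aOpNorm (R * R) (T2 + T4) ^ 2 + aOpNorm (R * R) (T2 - T4) ^ 2) / 2) := by
  rw [add_comm T2 T4, aOpNorm_sub_comm _ T2]
  calc _ = ‖(⟪(R * R) (T1 x), x⟫_ℂ + ⟪(R * R) (T3 x), y⟫_ℂ) +
          (⟪(R * R) (T4 y), y⟫_ℂ + ⟪(R * R) (T2 y), x⟫_ℂ)‖ := by
        simp only [map_add, inner_add_left]
        ring_nf
    _ ≤ _ := norm_add_le _ _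
    _ ≤ _ := add_le_add (norm_inner_add_inner_le_of_column hR h1 h3 hxy)
        (norm_inner_add_inner_le_of_column hR h4 h2 (by linarith))
    _ ≤ _ := mul_add_mul_le_add_of_sq_add_sq_eq_one (Real.sqrt_nonneg _) (Real.sqrt_nonneg _)
        (norm_nonneg _) (norm_nonneg _) hxy

end SquareRoot

theorem stmt12_general (A T1 T2 T3 T4 S1 S2 S3 S4 : H →L[ℂ] H) (hA : A.IsPositive)
    (hS1 : A ∘L S1 = (ContinuousLinearMap.adjoint T1) ∘L A)
    (hS2 : A ∘L S2 = (ContinuousLinearMap.adjoint T2) ∘L A)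
    (hS3 : A ∘L S3 = (ContinuousLinearMap.adjoint T3) ∘L A)
    (hS4 : A ∘L S4 = (ContinuousLinearMap.adjoint T4) ∘L A) :
    wB A T1 T2 T3 T4 ≤
      min (Real.sqrt (((aOpNorm A (T1 + T2)) ^ 2 + (aOpNorm A (T1 - T2)) ^ 2) / 2) +
           Real.sqrt (((aOpNorm A (T4 + T3)) ^ 2 + (aOpNorm A (T4 - T3)) ^ 2) / 2))
          (Real.sqrt (((aOpNorm A (T1 + T3)) ^ 2 + (aOpNorm A (T1 - T3)) ^ 2) / 2) +
           Real.sqrt (((aOpNorm A (T2 + T4)) ^ 2 + (aOpNorm A (T2 - T4)) ^ 2) / 2)) := by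
  obtain ⟨R, hR, rfl⟩ : ∃ R : H →L[ℂ] H, IsSelfAdjoint R ∧ R * R = A :=
    ⟨CFC.sqrt A, (CFC.sqrt_nonneg A).isSelfAdjoint,
      CFC.sqrt_mul_sqrt_self A ((nonneg_iff_isPositive A).mpr hA)⟩
  refine le_min (Real.sSup_le ?_ (by positivity)) (Real.sSup_le ?_ (by positivity)) <;>
    rintro _ ⟨x, y, hxy, rfl⟩ <;>
    rw [Real.sqrt_eq_one, re_inner_mul_self_apply_self hR, re_inner_mul_self_apply_self hR] at hxy
  · exact norm_inner_le_sqrt_add_sqrt_of_rows hR hS1 hS2 hS3 hS4 hxy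
  · exact norm_inner_le_sqrt_add_sqrt_of_columns hR hS1 hS2 hS3 hS4 hxy

theorem stmt12 (A T1 T2 T3 T4 S1 S2 S3 S4 : H →L[ℂ] H) (hA : A.IsPositive)
    (hS1 : A ∘L S1 = (ContinuousLinearMap.adjoint T1) ∘L A)
    (hS1r : Set.range (⇑S1) ⊆ closure (Set.range (⇑A)))
    (hS2 : A ∘L S2 = (ContinuousLinearMap.adjoint T2) ∘L A)
    (hS2r : Set.range (⇑S2) ⊆ closure (Set.range (⇑A)))
    (hS3 : A ∘L S3 = (ContinuousLinearMap.adjoint T3) ∘L A)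
    (hS3r : Set.range (⇑S3) ⊆ closure (Set.range (⇑A)))
    (hS4 : A ∘L S4 = (ContinuousLinearMap.adjoint T4) ∘L A)
    (hS4r : Set.range (⇑S4) ⊆ closure (Set.range (⇑A))) :
    wB A T1 T2 T3 T4 ≤
      min (Real.sqrt (((aOpNorm A (T1 + T2)) ^ 2 + (aOpNorm A (T1 - T2)) ^ 2) / 2) +
           Real.sqrt (((aOpNorm A (T4 + T3)) ^ 2 + (aOpNorm A (T4 - T3)) ^ 2) / 2))
          (Real.sqrt (((aOpNorm A (T1 + T3)) ^ 2 + (aOpNorm A (T1 - T3)) ^ 2) / 2) +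
           Real.sqrt (((aOpNorm A (T2 + T4)) ^ 2 + (aOpNorm A (T2 - T4)) ^ 2) / 2)) :=
  stmt12_general A T1 T2 T3 T4 S1 S2 S3 S4 hA hS1 hS2 hS3 hS4
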